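/- Closest pair property: for a finite set A of at least two points in the plane in general position, if a, b ∈ A realize the minimum pairwise distance, then the open disk with diameter segment ab contains no point of A; consequently the circle through a and b with diameter ‖a−b‖ is an empty circle, so the edge ab satisfies the empty-circle (Delaunay) condition. -/
import Mathlib


theorem closest_pair_empty_circle (A : Finset (EuclideanSpace ℝ (Fin 2)))
    (hcard : 2 ≤ A.card) (a b : EuclideanSpace ℝ (Fin 2))
    (ha : a ∈ A) (hb : b ∈ A) (hab : a ≠ b)
    (hmin : ∀ p ∈ A, ∀ q ∈ A, p ≠ q → ‖a - b‖ ≤ ‖p - q‖) :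
    ∀ c ∈ A, c ≠ a → c ≠ b → ¬ (‖c - midpoint ℝ a b‖ < ‖a - b‖ / 2) := by
  intro c hc hca hcb hlt
  have h1 : ‖a - b‖ ≤ ‖a - c‖ := hmin a ha c hc (fun h => hca h.symm)
  have h2 : ‖a - b‖ ≤ ‖b - c‖ := hmin b hb c hc (fun h => hcb h.symm)
  have hpar := parallelogram_law_with_norm ℝ (a - c) (b - c)
  have hsum : a - c + (b - c) = (2:ℝ) • (midpoint ℝ a b - c) := by
    rw [midpoint_eq_smul_add, invOf_eq_inv]
    module
  have hdiff : a - c - (b - c) = a - b := by abel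
  rw [hsum, hdiff, norm_smul] at hpar
  have hpos : 0 < ‖a - b‖ := norm_pos_iff.mpr (sub_ne_zero.mpr hab)
  have hm : ‖c - midpoint ℝ a b‖ = ‖midpoint ℝ a b - c‖ := norm_sub_rev _ _
  rw [hm] at hlt
  norm_num at hpar
  nlinarith [norm_nonneg (midpoint ℝ a b - c), norm_nonneg (a - b),
    sq_nonneg (‖a-c‖ - ‖b-c‖), Real.norm_two]
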